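/- arXiv:2205.09680 — 2 statements merged into one kernel-verified Lean document; each statement's English description precedes it below -/
import Mathlib

section
/- Suppose r : [0,1] → [0,1] and the responses R_j^k are independent Bernoulli with E[R_j^k] = r(S_j^k). Then E[ECE^2] ≥ Σ_{j=1}^m (S_{j+1}^1 − S_j^1)(r̃_j − S̃_j)², where r̃_j and S̃_j are the bin averages of r(S_j^k) and S_j^k respectively. -/
open MeasureTheory ProbabilityTheory

/-! The bin average of `R_j^k - S_j^k` has mean `r̃_j - S̃_j`, and for any square-integrable
variable `(E X)² ≤ E[X²]` because the variance is nonnegative; summing with the nonnegative bin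
widths gives the bound. -/

section
variable {Ω : Type*} [MeasurableSpace Ω] {μ : Measure Ω}

lemma memLp_of_forall_eq_zero_or_eq_one [IsFiniteMeasure μ] {X : Ω → ℝ} (hX : Measurable X)
    (h01 : ∀ ω, X ω = 0 ∨ X ω = 1) (p : ENNReal) : MemLp X p μ :=
  (memLp_top_of_bound hX.aestronglyMeasurable 1 <| ae_of_all _ fun ω => by
    rcases h01 ω with h | h <;> simp [h]).mono_exponent le_top

lemma sq_integral_le_integral_sq [IsProbabilityMeasure μ] {X : Ω → ℝ} (hX : MemLp X 2 μ) :
    (∫ ω, X ω ∂μ) ^ 2 ≤ ∫ ω, X ω ^ 2 ∂μ := by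
  have hvar := variance_nonneg X μ
  rw [variance_eq_sub hX] at hvar
  simpa only [Pi.pow_apply, sub_nonneg] using hvar

lemma sum_mul_sq_integral_le_integral_sum_mul_sq [IsProbabilityMeasure μ] {ι : Type*}
    (s : Finset ι) {w : ι → ℝ} (hw : ∀ i ∈ s, 0 ≤ w i) {X : ι → Ω → ℝ}
    (hX : ∀ i ∈ s, MemLp (X i) 2 μ) :
    ∑ i ∈ s, w i * (∫ ω, X i ω ∂μ) ^ 2 ≤ ∫ ω, ∑ i ∈ s, w i * X i ω ^ 2 ∂μ := by
  rw [integral_finsetSum _ fun i hi => (hX i hi).integrable_sq.const_mul _]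
  refine Finset.sum_le_sum fun i hi => ?_
  rw [integral_const_mul]
  exact mul_le_mul_of_nonneg_left (sq_integral_le_integral_sq (hX i hi)) (hw i hi)

lemma integral_sum_sub_div [IsProbabilityMeasure μ] {ι : Type*} (s : Finset ι)
    {X : ι → Ω → ℝ} (hX : ∀ i ∈ s, Integrable (X i) μ) (c : ι → ℝ) (n : ℝ) :
    ∫ ω, ∑ i ∈ s, (X i ω - c i) / n ∂μ =
      1 / n * ∑ i ∈ s, ∫ ω, X i ω ∂μ - 1 / n * ∑ i ∈ s, c i := by
  rw [integral_finsetSum (f := fun i ω => (X i ω - c i) / n) _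
    fun i hi => ((hX i hi).sub (integrable_const (c i))).div_const n]
  have hterm : ∀ i ∈ s, ∫ ω, (X i ω - c i) / n ∂μ = ((∫ ω, X i ω ∂μ) - c i) / n := fun i hi => by
    rw [integral_div, integral_sub (hX i hi) (integrable_const _), integral_const, probReal_univ,
      one_smul]
  rw [Finset.sum_congr rfl hterm, ← Finset.sum_div, Finset.sum_sub_distrib]
  ring

end

theorem stmt_10_general {Ω : Type*} [MeasureSpace Ω] [IsProbabilityMeasure (ℙ : Measure Ω)]
    (m : ℕ) (nj : Fin m → ℕ)
    (E : Fin (m + 1) → ℝ) (hE : Monotone E)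
    (r : ℝ → ℝ)
    (S : (j : Fin m) → Fin (nj j) → ℝ)
    (R : (j : Fin m) → Fin (nj j) → Ω → ℝ)
    (hmeas : ∀ j k, Measurable (R j k))
    (h01 : ∀ j k ω, R j k ω = 0 ∨ R j k ω = 1)
    (hmean : ∀ j k, ∫ ω, R j k ω = r (S j k)) :
    ∑ j : Fin m, (E j.succ - E j.castSucc) *
        ((1 / (nj j : ℝ)) * ∑ k, r (S j k) - (1 / (nj j : ℝ)) * ∑ k, S j k) ^ 2 ≤
      ∫ ω, ∑ j : Fin m, (E j.succ - E j.castSucc) *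
          (∑ k, (R j k ω - S j k) / (nj j : ℝ)) ^ 2 := by
  have hRLp : ∀ j k, MemLp (R j k) 2 ℙ := fun j k =>
    memLp_of_forall_eq_zero_or_eq_one (hmeas j k) (h01 j k) 2
  have hbin_mean : ∀ j, ∫ ω, ∑ k, (R j k ω - S j k) / (nj j : ℝ) =
      (1 / (nj j : ℝ)) * ∑ k, r (S j k) - (1 / (nj j : ℝ)) * ∑ k, S j k := fun j => by
    rw [integral_sum_sub_div _ fun k _ => (hRLp j k).integrable one_le_two]
    simp only [hmean]
  have hbin_Lp : ∀ j, MemLp (fun ω => ∑ k, (R j k ω - S j k) / (nj j : ℝ)) 2 ℙ := fun j =>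
    memLp_finsetSum _ fun k _ => by
      simpa only [div_eq_mul_inv, Pi.sub_apply] using
        ((hRLp j k).sub (memLp_const (S j k))).mul_const _
  simp only [← hbin_mean]
  exact sum_mul_sq_integral_le_integral_sum_mul_sq _
    (fun j _ => sub_nonneg.2 (hE (Fin.castSucc_le_succ j))) fun j _ => hbin_Lp j

/-- Squared-bias lower bound: if `r : [0,1] → [0,1]`
and the responses `R_j^k` are independent `{0,1}`-valued with `E[R_j^k] = r(S_j^k)`,
then `E[ECE²] ≥ Σ_j (S_{j+1}^1 − S_j^1)(r̃_j − S̃_j)²`,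
where `r̃_j = (1/n_j) Σ_k r(S_j^k)` and `S̃_j = (1/n_j) Σ_k S_j^k`. -/
theorem stmt_10 {Ω : Type*} [MeasureSpace Ω] [IsProbabilityMeasure (ℙ : Measure Ω)]
    (m : ℕ) (nj : Fin m → ℕ) (hnj : ∀ j, 0 < nj j)
    (E : Fin (m + 1) → ℝ) (hE : Monotone E)
    (hE0 : ∀ j, E j ∈ Set.Icc (0 : ℝ) 1) (hElast : E (Fin.last m) = 1)
    (r : ℝ → ℝ) (hr : ∀ s ∈ Set.Icc (0 : ℝ) 1, r s ∈ Set.Icc (0 : ℝ) 1)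
    (S : (j : Fin m) → Fin (nj j) → ℝ)
    (hS : ∀ j k, S j k ∈ Set.Icc (0 : ℝ) 1)
    (R : (j : Fin m) → Fin (nj j) → Ω → ℝ)
    (hmeas : ∀ j k, Measurable (R j k))
    (hindep : iIndepFun
      (fun (p : (j : Fin m) × Fin (nj j)) => R p.1 p.2) ℙ)
    (h01 : ∀ j k ω, R j k ω = 0 ∨ R j k ω = 1)
    (hmean : ∀ j k, ∫ ω, R j k ω = r (S j k)) :
    ∑ j : Fin m, (E j.succ - E j.castSucc) *
        ((1 / (nj j : ℝ)) * ∑ k, r (S j k) - (1 / (nj j : ℝ)) * ∑ k, S j k) ^ 2 ≤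
      ∫ ω, ∑ j : Fin m, (E j.succ - E j.castSucc) *
          (∑ k, (R j k ω - S j k) / (nj j : ℝ)) ^ 2 :=
  stmt_10_general m nj E hE r S R hmeas h01 hmean
end

section
/- Suppose r : [0,1] → [0,1] is continuous with ∫_0^1 (r(s) − s)² ds > 0, and for each n the bin averages satisfy: the bins have maximal width tending to 0 as n → ∞. Then liminf over n of Σ_{j=1}^m (S_{j+1}^1 − S_j^1)(r̃_j − S̃_j)² is at least ∫_0^1 (r(s) − s)² ds > 0, where r̃_j and S̃_j are the averages of r(S_j^k) and S_j^k over bin j. -/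
/-!
Write `g s = r s - s`, so that `r̃_j - S̃_j` is the average of `g` over the scores of bin `j`.
Once the bins are narrower than the modulus of uniform continuity of `g` for `ε`, `g` stays
within `ε` of that average `D_j` on the whole bin, and `g² - D_j² = 2 g (g - D_j) - (g - D_j)²`
bounds `∫ g²` over the bin by its width times `D_j² + 2 M ε`, where `|g| ≤ M` on `[0,1]`.
Summing over the bins and adding the gap `[0, E 0]` gives `∫₀¹ g² ≤ Σ_j (E_{j+1} - E_j) D_j² + O(ε)`
for all large `n`.
-/

open MeasureTheory Filter Set Topology

theorem Fin.sum_succ_sub_castSucc {G : Type*} [AddCommGroup G] {m : ℕ} (E : Fin (m + 1) → G) :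
    ∑ j : Fin m, (E j.succ - E j.castSucc) = E (Fin.last m) - E 0 := by
  induction m with
  | zero => simp
  | succ m ih =>
    have hinit := ih (E ∘ Fin.castSucc)
    simp only [Function.comp_apply, ← Fin.succ_castSucc, Fin.castSucc_zero] at hinit
    rw [Fin.sum_univ_castSucc, hinit, Fin.succ_last]
    abel

theorem abs_avg_sub_le {N : ℕ} (hN : 0 < N) {c : Fin N → ℝ} {y ε : ℝ}
    (h : ∀ k, |c k - y| ≤ ε) : |(1 / (N : ℝ)) * ∑ k, c k - y| ≤ ε := by
  have hN' : (0 : ℝ) < N := Nat.cast_pos.2 hN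
  have hsum : |∑ k, (c k - y)| ≤ N * ε := by
    calc |∑ k, (c k - y)| ≤ ∑ k, |c k - y| := Finset.abs_sum_le_sum_abs _ _
      _ ≤ ∑ _k : Fin N, ε := Finset.sum_le_sum fun k _ => h k
      _ = N * ε := by simp
  have heq : (1 / (N : ℝ)) * ∑ k, c k - y = (1 / (N : ℝ)) * ∑ k, (c k - y) := by
    rw [Finset.sum_sub_distrib, Finset.sum_const, Finset.card_univ, Fintype.card_fin,
      nsmul_eq_mul]
    field_simp
  rw [heq, abs_mul, abs_of_pos (by positivity), one_div_mul_eq_div, div_le_iff₀ hN', mul_comm]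
  exact hsum

theorem sq_le_sq_add_of_abs_sub_le {a b M ε : ℝ} (ha : |a| ≤ M) (hab : |a - b| ≤ ε) :
    a ^ 2 ≤ b ^ 2 + 2 * M * ε := by
  have : a * (a - b) ≤ M * ε := by
    calc a * (a - b) ≤ |a| * |a - b| := by rw [← abs_mul]; exact le_abs_self _
      _ ≤ M * ε := mul_le_mul ha hab (abs_nonneg _) ((abs_nonneg _).trans ha)
  nlinarith [sq_nonneg (a - b)]

theorem le_of_forall_pos_sub_mul_le {a b C : ℝ} (h : ∀ ε > 0, a - C * ε ≤ b) : a ≤ b := by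
  have hlim : Tendsto (fun ε => a - C * ε) (𝓝[>] 0) (nhds a) := by
    have : Continuous fun ε : ℝ => a - C * ε := by fun_prop
    simpa using (this.tendsto 0).mono_left nhdsWithin_le_nhds
  exact le_of_tendsto hlim (eventually_nhdsWithin_of_forall h)

theorem integral_le_sum_mul_of_le_on_bins {m : ℕ} {E : Fin (m + 1) → ℝ} (hE : Monotone E)
    {f : ℝ → ℝ} (hf : IntervalIntegrable f volume (E 0) (E (Fin.last m))) {c : Fin m → ℝ}
    (hc : ∀ j, ∀ s ∈ Icc (E j.castSucc) (E j.succ), f s ≤ c j) :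
    ∫ s in E 0..E (Fin.last m), f s ≤ ∑ j, (E j.succ - E j.castSucc) * c j := by
  induction m with
  | zero => simp
  | succ m ih =>
    set a := E (Fin.last m).castSucc
    have ha : a ∈ uIcc (E 0) (E (Fin.last (m + 1))) :=
      mem_uIcc_of_le (hE (Fin.zero_le _)) (hE (Fin.le_last _))
    have hinit := ih (E := E ∘ Fin.castSucc) (hE.comp Fin.strictMono_castSucc.monotone)
      (hf.mono_set (uIcc_subset_uIcc_left ha)) (fun j s hs => hc j.castSucc s hs)
    have hlast : ∫ s in a..E (Fin.last (m + 1)), f s ≤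
        (E (Fin.last (m + 1)) - a) * c (Fin.last m) := by
      have := intervalIntegral.integral_mono_on (hE (Fin.castSucc_le_succ _))
        (hf.mono_set (uIcc_subset_uIcc_right ha)) intervalIntegrable_const (hc (Fin.last m))
      simpa [mul_comm] using this
    simp only [Function.comp_apply, Fin.castSucc_zero] at hinit
    rw [← intervalIntegral.integral_add_adjacent_intervals
      (hf.mono_set (uIcc_subset_uIcc_left ha)) (hf.mono_set (uIcc_subset_uIcc_right ha)),
      Fin.sum_univ_castSucc]
    simp only [Fin.succ_castSucc]
    exact add_le_add hinit hlast

theorem integral_sq_le_binned_sum {m : ℕ} {E : Fin (m + 1) → ℝ} (hE : Monotone E)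
    {N : Fin m → ℕ} (hN : ∀ j, 0 < N j) {x : (j : Fin m) → Fin (N j) → ℝ}
    (hx : ∀ j k, x j k ∈ Icc (E j.castSucc) (E j.succ)) {g : ℝ → ℝ}
    (hg : ContinuousOn g (Icc (E 0) (E (Fin.last m)))) {M ε : ℝ}
    (hM : ∀ s ∈ Icc (E 0) (E (Fin.last m)), |g s| ≤ M)
    (hε : ∀ j : Fin m, ∀ s ∈ Icc (E j.castSucc) (E j.succ),
      ∀ t ∈ Icc (E j.castSucc) (E j.succ), |g s - g t| ≤ ε) :
    ∫ s in E 0..E (Fin.last m), g s ^ 2 ≤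
      ∑ j, (E j.succ - E j.castSucc) * ((1 / (N j : ℝ)) * ∑ k, g (x j k)) ^ 2 +
        2 * M * ε * (E (Fin.last m) - E 0) := by
  have hbin (j : Fin m) : Icc (E j.castSucc) (E j.succ) ⊆ Icc (E 0) (E (Fin.last m)) :=
    Icc_subset_Icc (hE (Fin.zero_le _)) (hE (Fin.le_last _))
  calc ∫ s in E 0..E (Fin.last m), g s ^ 2
      ≤ ∑ j, (E j.succ - E j.castSucc) *
          (((1 / (N j : ℝ)) * ∑ k, g (x j k)) ^ 2 + 2 * M * ε) :=
        integral_le_sum_mul_of_le_on_bins hE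
          ((hg.pow 2).intervalIntegrable_of_Icc (hE (Fin.zero_le _))) fun j s hs =>
          sq_le_sq_add_of_abs_sub_le (hM s (hbin j hs)) <| by
            rw [abs_sub_comm]; exact abs_avg_sub_le (hN j) fun k => hε j _ (hx j k) s hs
    _ = _ := by
      rw [← Fin.sum_succ_sub_castSucc E, Finset.mul_sum, ← Finset.sum_add_distrib]
      simp only [mul_add, mul_comm]

theorem binned_sum_sq_le {m : ℕ} {E : Fin (m + 1) → ℝ} (hE : Monotone E)
    {N : Fin m → ℕ} (hN : ∀ j, 0 < N j) {x : (j : Fin m) → Fin (N j) → ℝ}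
    (hx : ∀ j k, x j k ∈ Icc (E j.castSucc) (E j.succ)) {g : ℝ → ℝ} {M : ℝ}
    (hM : ∀ s ∈ Icc (E 0) (E (Fin.last m)), |g s| ≤ M) :
    ∑ j, (E j.succ - E j.castSucc) * ((1 / (N j : ℝ)) * ∑ k, g (x j k)) ^ 2 ≤
      M ^ 2 * (E (Fin.last m) - E 0) := by
  have hbin (j : Fin m) : Icc (E j.castSucc) (E j.succ) ⊆ Icc (E 0) (E (Fin.last m)) :=
    Icc_subset_Icc (hE (Fin.zero_le _)) (hE (Fin.le_last _))
  calc ∑ j, (E j.succ - E j.castSucc) * ((1 / (N j : ℝ)) * ∑ k, g (x j k)) ^ 2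
      ≤ ∑ j : Fin m, (E j.succ - E j.castSucc) * M ^ 2 := by
        refine Finset.sum_le_sum fun j _ =>
          mul_le_mul_of_nonneg_left ?_ (sub_nonneg.2 (hE (Fin.castSucc_le_succ j)))
        have := abs_avg_sub_le (hN j) (y := 0) (ε := M) fun k => by
          rw [sub_zero]; exact hM _ (hbin j (hx j k))
        rw [sub_zero] at this
        exact sq_le_sq' (abs_le.1 this).1 (abs_le.1 this).2
    _ = M ^ 2 * (E (Fin.last m) - E 0) := by
      rw [← Finset.sum_mul, Fin.sum_succ_sub_castSucc, mul_comm]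

theorem integral_Icc_sq_le_binned_sum {m : ℕ} {E : Fin (m + 1) → ℝ} (hE : Monotone E)
    (hE0 : 0 ≤ E 0) (hElast : E (Fin.last m) = 1)
    {N : Fin m → ℕ} (hN : ∀ j, 0 < N j) {x : (j : Fin m) → Fin (N j) → ℝ}
    (hx : ∀ j k, x j k ∈ Icc (E j.castSucc) (E j.succ)) {g : ℝ → ℝ}
    (hg : ContinuousOn g (Icc 0 1)) {M : ℝ} (hM : ∀ s ∈ Icc (0 : ℝ) 1, |g s| ≤ M)
    {δ ε : ℝ} (hε : 0 ≤ ε)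
    (hδ : ∀ s ∈ Icc (0 : ℝ) 1, ∀ t ∈ Icc (0 : ℝ) 1,
      dist s t ≤ δ → dist (g s) (g t) ≤ ε)
    (hwidth : ∀ j : Fin m, E j.succ - E j.castSucc ≤ δ) :
    ∫ s in Icc (0 : ℝ) 1, g s ^ 2 ≤
      ∑ j, (E j.succ - E j.castSucc) * ((1 / (N j : ℝ)) * ∑ k, g (x j k)) ^ 2 +
        M ^ 2 * E 0 + 2 * M * ε := by
  have hE01 : E 0 ≤ 1 := hElast ▸ hE (Fin.zero_le _)
  have hsub : Icc (E 0) (E (Fin.last m)) ⊆ Icc 0 1 := hElast ▸ Icc_subset_Icc_left hE0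
  have hbin (j : Fin m) : Icc (E j.castSucc) (E j.succ) ⊆ Icc 0 1 :=
    (Icc_subset_Icc (hE (Fin.zero_le _)) (hE (Fin.le_last _))).trans hsub
  have hM0 : 0 ≤ M := (abs_nonneg _).trans (hM 0 ⟨le_rfl, zero_le_one⟩)
  have hint : IntervalIntegrable (fun s => g s ^ 2) volume 0 1 :=
    (hg.pow 2).intervalIntegrable_of_Icc zero_le_one
  have hgap : ∫ s in (0 : ℝ)..E 0, g s ^ 2 ≤ M ^ 2 * E 0 := by
    have := intervalIntegral.norm_integral_le_of_norm_le_const (a := 0) (b := E 0)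
      (f := fun s => g s ^ 2) (C := M ^ 2) fun s hs => by
        have hs01 : s ∈ Icc (0 : ℝ) 1 :=
          uIcc_subset_Icc ⟨le_rfl, zero_le_one⟩ ⟨hE0, hE01⟩ (uIoc_subset_uIcc hs)
        simpa [norm_pow] using pow_le_pow_left₀ (abs_nonneg _) (hM s hs01) 2
    rw [sub_zero, abs_of_nonneg hE0] at this
    exact (le_abs_self _).trans this
  have hbins := integral_sq_le_binned_sum hE hN hx (hg.mono hsub) (fun s hs => hM s (hsub hs))
    fun j s hs t ht => by
      rw [← Real.dist_eq]
      refine hδ s (hbin j hs) t (hbin j ht) ?_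
      rw [Real.dist_eq, abs_le]
      constructor <;> linarith [hs.1, hs.2, ht.1, ht.2, hwidth j]
  have hmem : E 0 ∈ uIcc (0 : ℝ) 1 := mem_uIcc_of_le hE0 hE01
  rw [integral_Icc_eq_integral_Ioc, ← intervalIntegral.integral_of_le zero_le_one,
    ← intervalIntegral.integral_add_adjacent_intervals
      (hint.mono_set (uIcc_subset_uIcc_left hmem)) (hint.mono_set (uIcc_subset_uIcc_right hmem))]
  rw [hElast] at hbins
  nlinarith [mul_nonneg hM0 hε]

theorem stmt_18_general (r : ℝ → ℝ) (hrcont : ContinuousOn r (Set.Icc 0 1))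
    (m : ℕ → ℕ)
    (nj : (n : ℕ) → Fin (m n) → ℕ) (hnj : ∀ n j, 0 < nj n j)
    (E : (n : ℕ) → Fin (m n + 1) → ℝ) (hEmono : ∀ n, Monotone (E n))
    (hE0 : ∀ n, 0 ≤ E n 0) (hElast : ∀ n, E n (Fin.last (m n)) = 1)
    (S : (n : ℕ) → (j : Fin (m n)) → Fin (nj n j) → ℝ)
    (hS : ∀ n j k, S n j k ∈ Set.Icc (E n j.castSucc) (E n j.succ))
    (hwidth : ∀ ε > (0 : ℝ), ∀ᶠ n in atTop,
      E n 0 ≤ ε ∧ ∀ j : Fin (m n), E n j.succ - E n j.castSucc ≤ ε) :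
    ∫ s in Set.Icc (0 : ℝ) 1, (r s - s) ^ 2 ≤
      atTop.liminf (fun n => ∑ j : Fin (m n), (E n j.succ - E n j.castSucc) *
        ((1 / (nj n j : ℝ)) * ∑ k, r (S n j k) -
          (1 / (nj n j : ℝ)) * ∑ k, S n j k) ^ 2) := by
  set g : ℝ → ℝ := fun s => r s - s
  have hg : ContinuousOn g (Icc 0 1) := hrcont.sub continuousOn_id
  obtain ⟨M, hM⟩ := isCompact_Icc.exists_bound_of_continuousOn hg
  simp only [Real.norm_eq_abs] at hM
  have hbinAvg (n : ℕ) (j : Fin (m n)) : (1 / (nj n j : ℝ)) * ∑ k, r (S n j k) -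
      (1 / (nj n j : ℝ)) * ∑ k, S n j k = (1 / (nj n j : ℝ)) * ∑ k, g (S n j k) := by
    rw [← mul_sub, ← Finset.sum_sub_distrib]
  simp only [hbinAvg]
  refine le_of_forall_pos_sub_mul_le (C := M ^ 2 + 2 * M) fun ε hε =>
    le_liminf_of_le (isCoboundedUnder_ge_of_le atTop (x := M ^ 2) fun n => ?_) ?_
  · have := binned_sum_sq_le (hEmono n) (hnj n) (hS n)
      fun s hs => hM s ((hElast n) ▸ Icc_subset_Icc_left (hE0 n) hs)
    rw [hElast n] at this
    nlinarith [hE0 n, sq_nonneg M]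
  · obtain ⟨δ, hδ, hgδ⟩ := Metric.uniformContinuousOn_iff_le.1
      (isCompact_Icc.uniformContinuousOn_of_continuous hg) ε hε
    filter_upwards [hwidth (min ε δ) (lt_min hε hδ)] with n ⟨h0, hw⟩
    have := integral_Icc_sq_le_binned_sum (hEmono n) (hE0 n) (hElast n) (hnj n) (hS n) hg hM
      hε.le hgδ fun j => (hw j).trans (min_le_right _ _)
    nlinarith [mul_le_mul_of_nonneg_left (h0.trans (min_le_left _ _)) (sq_nonneg M)]

/-- Squared-bias Riemann-sum lower bound (used in Corollary 2.10): let
`r : [0,1] → [0,1]` be continuous with `∫_0^1 (r(s) − s)² ds > 0`. For each `n`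
there are `m n` bins with edges `0 ≤ E n 0 ≤ E n 1 ≤ ... ≤ E n (m n) = 1`,
each bin `j` containing scores `S n j k ∈ [E n j, E n (j+1)]`, and the maximal
bin width (including the initial gap `E n 0 − 0`) tends to `0` as `n → ∞`. Then
the liminf over `n` of `Σ_j (E n (j+1) − E n j)·(r̃_j − S̃_j)²` is at least
`∫_0^1 (r(s) − s)² ds > 0`, where `r̃_j` and `S̃_j` are the averages of `r(S_j^k)`
and `S_j^k` over bin `j`. -/
theorem stmt_18 (r : ℝ → ℝ) (hrcont : ContinuousOn r (Set.Icc 0 1))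
    (hr01 : ∀ s ∈ Set.Icc (0 : ℝ) 1, r s ∈ Set.Icc (0 : ℝ) 1)
    (hpos : 0 < ∫ s in Set.Icc (0 : ℝ) 1, (r s - s) ^ 2)
    (m : ℕ → ℕ) (hm : ∀ n, 0 < m n)
    (nj : (n : ℕ) → Fin (m n) → ℕ) (hnj : ∀ n j, 0 < nj n j)
    (E : (n : ℕ) → Fin (m n + 1) → ℝ) (hEmono : ∀ n, Monotone (E n))
    (hE0 : ∀ n, 0 ≤ E n 0) (hElast : ∀ n, E n (Fin.last (m n)) = 1)
    (S : (n : ℕ) → (j : Fin (m n)) → Fin (nj n j) → ℝ)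
    (hS : ∀ n j k, S n j k ∈ Set.Icc (E n j.castSucc) (E n j.succ))
    (hwidth : ∀ ε > (0 : ℝ), ∀ᶠ n in atTop,
      E n 0 ≤ ε ∧ ∀ j : Fin (m n), E n j.succ - E n j.castSucc ≤ ε) :
    ∫ s in Set.Icc (0 : ℝ) 1, (r s - s) ^ 2 ≤
      atTop.liminf (fun n => ∑ j : Fin (m n), (E n j.succ - E n j.castSucc) *
        ((1 / (nj n j : ℝ)) * ∑ k, r (S n j k) -
          (1 / (nj n j : ℝ)) * ∑ k, S n j k) ^ 2) :=
  stmt_18_general r hrcont m nj hnj E hEmono hE0 hElast S hS hwidth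
end
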